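/- Let $B_0 = \mathrm{diag}(\lambda_{0,1},\dots,\lambda_{0,n})$ and $B = \mathrm{diag}(\lambda_1,\dots,\lambda_n)$ be real diagonal $n\times n$ matrices, both invertible, with $\lambda_{0,i} \neq \lambda_j$ for all $i,j$. Let $P_0, P, F_n$ be $n\times n$ real matrices with $P_0$ invertible, let $\alpha, \beta, c \in \mathbb{R}^n$, define $Q(\xi) = F_n \left( P\, \exp(\xi B)\, \beta + c \right)$, $F^{\dagger} = P_0^{-1} F_n P$, $F_c = P_0^{-1} F_n$, $F^{\ddagger}_{i,j} = F^{\dagger}_{i,j}/(\lambda_j - \lambda_{0,i})$, and $\Psi(x) = P_0\, \exp(x B_0) \left( \alpha + \int_{x_L}^{x} \exp(-\xi B_0)\, P_0^{-1}\, Q(\xi)\, d\xi \right)$. Then for all $x_L \le x_R$, $\int_{x_L}^{x_R} \Psi(x)\, dx = P_0 B_0^{-1} \left( \exp(x_R B_0) - \exp(x_L B_0) \right) \left[ \alpha - \exp(-x_L B_0) F^{\ddagger} \exp(x_L B) \beta + B_0^{-1} \exp(-x_L B_0) F_c c \right] + P_0 F^{\ddagger} B^{-1} \left( \exp(x_R B)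 - \exp(x_L B) \right) \beta - P_0 B_0^{-1} F_c\, c\, (x_R - x_L)$. -/

import Mathlib

/-!
If `X` solves the Sylvester equation `X C - A X = Y`, then `ξ ↦ exp(-ξA) X exp(ξC)` is an
antiderivative of `ξ ↦ exp(-ξA) Y exp(ξC)`. The inner integrand of `Ψ` is a sum of two such
terms: the exponential source (`C = B`, solved by `F‡` because `B₀`, `B` are diagonal with
disjoint spectra) and the constant source (`C = 0`, solved by `-B₀⁻¹`). This gives
`Ψ(x) = P₀ (exp(xB₀) v + F‡ exp(xB) β - B₀⁻¹ F_c c)` with `v` the bracketed vector of the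
statement, and the outer integral is the case `A = 0` once more.
-/

open Matrix NormedSpace

variable {m : Type*} [Fintype m]

open scoped Norms.Operator in
theorem HasDerivAt.matrix_mulVec_const {M : ℝ → Matrix m m ℝ} {M' : Matrix m m ℝ} {t : ℝ}
    (h : HasDerivAt M M' t) (v : m → ℝ) : HasDerivAt (fun s => M s *ᵥ v) (M' *ᵥ v) t := by
  let L : Matrix m m ℝ →L[ℝ] (m → ℝ) :=
    LinearMap.toContinuousLinearMap
      { toFun := fun N => N *ᵥ v
        map_add' := fun N N' => add_mulVec N N' v
        map_smul' := fun c N => smul_mulVec c N v }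
  exact L.hasFDerivAt.comp_hasDerivAt t h

variable [DecidableEq m]

theorem Commute.matrix_inv_left {R : Type*} [CommRing R] {A M : Matrix m m R}
    (h : Commute A M) : Commute A⁻¹ M := by
  by_cases hA : IsUnit A.det
  · calc A⁻¹ * M = A⁻¹ * (M * A) * A⁻¹ := by
          rw [Matrix.mul_assoc, Matrix.mul_assoc, mul_nonsing_inv A hA, Matrix.mul_one]
      _ = M * A⁻¹ := by
          rw [← h.eq, ← Matrix.mul_assoc, nonsing_inv_mul A hA, Matrix.one_mul]
  · simp [nonsing_inv_apply_not_isUnit A hA]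

theorem exp_smul_mul_exp_neg_smul (A : Matrix m m ℝ) (x : ℝ) :
    exp (x • A) * exp ((-x) • A) = 1 := by
  rw [← Matrix.exp_add_of_commute _ _ ((Commute.refl A).smul_left _ |>.smul_right _),
    ← add_smul, add_neg_cancel, zero_smul, exp_zero]

open scoped Norms.Operator in
theorem hasDerivAt_exp_neg_smul_mul_mul_exp_smul (A X C : Matrix m m ℝ) (t : ℝ) :
    HasDerivAt (fun s : ℝ => exp ((-s) • A) * X * exp (s • C))
      (exp ((-t) • A) * (X * C - A * X) * exp (t • C)) t := by
  have hA : HasDerivAt (fun s : ℝ => exp ((-s) • A)) (-(exp ((-t) • A) * A)) t :=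
    ((hasDerivAt_exp_smul_const A (-t)).scomp t (hasDerivAt_neg t)).congr_deriv
      (neg_one_smul ℝ _)
  refine ((hA.mul_const X).fun_mul (hasDerivAt_exp_smul_const' C t)).congr_deriv ?_
  rw [mul_sub, sub_mul, neg_mul, neg_mul, neg_add_eq_sub]
  simp only [Matrix.mul_assoc]
  -- the two sides differ only in the ring structure used (operator-norm ring vs. `Matrix`)
  rfl

theorem hasDerivAt_exp_neg_smul_mul_mul_exp_smul_mulVec (A X C : Matrix m m ℝ) (v : m → ℝ)
    (t : ℝ) :
    HasDerivAt (fun s : ℝ => (exp ((-s) • A) * X * exp (s • C)) *ᵥ v)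
      ((exp ((-t) • A) * (X * C - A * X) * exp (t • C)) *ᵥ v) t :=
  (hasDerivAt_exp_neg_smul_mul_mul_exp_smul A X C t).matrix_mulVec_const v

theorem continuous_exp_neg_smul_mul_mul_exp_smul_mulVec (A X C : Matrix m m ℝ) (v : m → ℝ) :
    Continuous fun s : ℝ => (exp ((-s) • A) * X * exp (s • C)) *ᵥ v :=
  continuous_iff_continuousAt.2 fun t =>
    (hasDerivAt_exp_neg_smul_mul_mul_exp_smul_mulVec A X C v t).continuousAt

theorem integral_exp_neg_smul_mul_mul_exp_smul_mulVec {A X C Y : Matrix m m ℝ}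
    (hX : X * C - A * X = Y) (v : m → ℝ) (a b : ℝ) :
    ∫ s in a..b, (exp ((-s) • A) * Y * exp (s • C)) *ᵥ v
      = (exp ((-b) • A) * X * exp (b • C)) *ᵥ v - (exp ((-a) • A) * X * exp (a • C)) *ᵥ v := by
  subst hX
  exact intervalIntegral.integral_eq_sub_of_hasDerivAt
    (fun s _ => hasDerivAt_exp_neg_smul_mul_mul_exp_smul_mulVec A X C v s)
    ((continuous_exp_neg_smul_mul_mul_exp_smul_mulVec A _ C v).intervalIntegrable a b)

theorem continuous_mul_exp_smul_mulVec (M A : Matrix m m ℝ) (v : m → ℝ) :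
    Continuous fun s : ℝ => (M * exp (s • A)) *ᵥ v := by
  simpa only [smul_zero, exp_zero, Matrix.one_mul] using
    continuous_exp_neg_smul_mul_mul_exp_smul_mulVec 0 M A v

theorem integral_mul_exp_smul_mulVec {A : Matrix m m ℝ} (hA : IsUnit A.det) (M : Matrix m m ℝ)
    (v : m → ℝ) (a b : ℝ) :
    ∫ s in a..b, (M * exp (s • A)) *ᵥ v = (M * A⁻¹ * (exp (b • A) - exp (a • A))) *ᵥ v := by
  have hX : M * A⁻¹ * A - 0 * (M * A⁻¹) = M := by
    rw [Matrix.mul_assoc, nonsing_inv_mul A hA, Matrix.mul_one, Matrix.zero_mul, sub_zero]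
  simpa only [smul_zero, exp_zero, Matrix.one_mul, Matrix.mul_sub, sub_mulVec] using
    integral_exp_neg_smul_mul_mul_exp_smul_mulVec hX v a b

theorem exp_smul_mulVec_add_integral_eq {A X C Y : Matrix m m ℝ} (hA : IsUnit A.det)
    (hX : X * C - A * X = Y) (α β d : m → ℝ) (a x : ℝ) :
    exp (x • A) *ᵥ (α + ∫ ξ in a..x, exp ((-ξ) • A) *ᵥ (Y *ᵥ (exp (ξ • C) *ᵥ β) + d))
      = exp (x • A) *ᵥ (α - (exp ((-a) • A) * X * exp (a • C)) *ᵥ β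
          + (A⁻¹ * exp ((-a) • A)) *ᵥ d)
        + (X * exp (x • C)) *ᵥ β - A⁻¹ *ᵥ d := by
  have hX₀ : -A⁻¹ * 0 - A * -A⁻¹ = 1 := by
    rw [Matrix.mul_zero, Matrix.mul_neg, mul_nonsing_inv A hA, zero_sub, neg_neg]
  have hsplit : ∀ ξ : ℝ, exp ((-ξ) • A) *ᵥ (Y *ᵥ (exp (ξ • C) *ᵥ β) + d)
      = (exp ((-ξ) • A) * Y * exp (ξ • C)) *ᵥ β + (exp ((-ξ) • A) * 1 * exp (ξ • 0)) *ᵥ d := by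
    intro ξ
    simp only [smul_zero, exp_zero, Matrix.mul_one, mulVec_add, mulVec_mulVec, Matrix.mul_assoc]
  simp_rw [hsplit]
  rw [intervalIntegral.integral_add
      ((continuous_exp_neg_smul_mul_mul_exp_smul_mulVec A Y C β).intervalIntegrable a x)
      ((continuous_exp_neg_smul_mul_mul_exp_smul_mulVec A 1 0 d).intervalIntegrable a x),
    integral_exp_neg_smul_mul_mul_exp_smul_mulVec hX,
    integral_exp_neg_smul_mul_mul_exp_smul_mulVec hX₀]
  have hcomm : exp ((-a) • A) * -A⁻¹ = -(A⁻¹ * exp ((-a) • A)) := by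
    rw [Matrix.mul_neg, ((Commute.refl A).smul_right _).exp_right.matrix_inv_left.eq]
  simp only [smul_zero, exp_zero, Matrix.mul_one, hcomm, Matrix.mul_neg, neg_mulVec, mulVec_add,
    mulVec_sub, mulVec_neg, mulVec_mulVec, ← Matrix.mul_assoc, exp_smul_mul_exp_neg_smul,
    Matrix.one_mul]
  abel

theorem mul_diagonal_sub_diagonal_mul_eq {K : Type*} [Field K] {a b : m → K}
    {X Y : Matrix m m K} (hab : ∀ i j, a i ≠ b j) (hX : ∀ i j, X i j = Y i j / (b j - a i)) :
    X * diagonal b - diagonal a * X = Y := by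
  ext i j
  rw [Matrix.sub_apply, mul_diagonal, diagonal_mul, hX, mul_comm (a i), ← mul_sub,
    div_mul_cancel₀ _ (sub_ne_zero.2 (hab i j).symm)]

theorem flux_integral_closed_form_general {n : ℕ}
    (lam₀ lam : Fin n → ℝ)
    (B₀ B : Matrix (Fin n) (Fin n) ℝ)
    (hB₀ : B₀ = Matrix.diagonal lam₀) (hB : B = Matrix.diagonal lam)
    (hB₀inv : IsUnit B₀.det) (hBinv : IsUnit B.det)
    (hdist : ∀ i j, lam₀ i ≠ lam j)
    (P₀ P Fn : Matrix (Fin n) (Fin n) ℝ)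
    (α β c : Fin n → ℝ)
    (Q : ℝ → Fin n → ℝ)
    (hQ : ∀ ξ : ℝ, Q ξ = Fn.mulVec (P.mulVec ((exp (ξ • B)).mulVec β) + c))
    (Fdag Fc Fddag : Matrix (Fin n) (Fin n) ℝ)
    (hFdag : Fdag = P₀⁻¹ * Fn * P)
    (hFc : Fc = P₀⁻¹ * Fn)
    (hFddag : ∀ i j, Fddag i j = Fdag i j / (lam j - lam₀ i))
    (xL xR : ℝ)
    (Ψ : ℝ → Fin n → ℝ)
    (hΨ : ∀ x : ℝ, Ψ x = P₀.mulVec ((exp (x • B₀)).mulVec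
      (α + ∫ ξ in xL..x, (exp ((-ξ) • B₀)).mulVec (P₀⁻¹.mulVec (Q ξ))))) :
    (∫ x in xL..xR, Ψ x)
      = (P₀ * B₀⁻¹ * (exp (xR • B₀) - exp (xL • B₀))).mulVec
          (α - (exp ((-xL) • B₀) * Fddag * exp (xL • B)).mulVec β
            + (B₀⁻¹ * exp ((-xL) • B₀) * Fc).mulVec c)
        + (P₀ * Fddag * B⁻¹ * (exp (xR • B) - exp (xL • B))).mulVec β
        - (xR - xL) • (P₀ * B₀⁻¹ * Fc).mulVec c := by
  have hsylv : Fddag * B - B₀ * Fddag = Fdag := by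
    rw [hB₀, hB]
    exact mul_diagonal_sub_diagonal_mul_eq hdist hFddag
  have hsource : ∀ ξ, P₀⁻¹ *ᵥ Q ξ = Fdag *ᵥ (exp (ξ • B) *ᵥ β) + Fc *ᵥ c := fun ξ => by
    simp only [hQ, hFdag, hFc, mulVec_add, mulVec_mulVec, Matrix.mul_assoc]
  set v := α - (exp ((-xL) • B₀) * Fddag * exp (xL • B)) *ᵥ β
    + (B₀⁻¹ * exp ((-xL) • B₀) * Fc) *ᵥ c
  have hΨ' : ∀ x, Ψ x = (P₀ * exp (x • B₀)) *ᵥ v + (P₀ * Fddag * exp (x • B)) *ᵥ β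
      - (P₀ * B₀⁻¹ * Fc) *ᵥ c := fun x => by
    rw [hΨ]
    simp_rw [hsource]
    rw [exp_smul_mulVec_add_integral_eq hB₀inv hsylv]
    simp only [v, mulVec_add, mulVec_sub, mulVec_mulVec, Matrix.mul_assoc]
  have hcont₀ := continuous_mul_exp_smul_mulVec P₀ B₀ v
  have hcont := continuous_mul_exp_smul_mulVec (P₀ * Fddag) B β
  rw [intervalIntegral.integral_congr fun x _ => hΨ' x,
    intervalIntegral.integral_sub
      ((hcont₀.intervalIntegrable _ _).add (hcont.intervalIntegrable _ _))
      intervalIntegrable_const,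
    intervalIntegral.integral_add (hcont₀.intervalIntegrable _ _) (hcont.intervalIntegrable _ _),
    integral_mul_exp_smul_mulVec hB₀inv, integral_mul_exp_smul_mulVec hBinv,
    intervalIntegral.integral_const]

/-- Closed-form spatial integral of the angular flux over `[x_L, x_R]` (Eq. 23):
with diagonal invertible `B₀ = diag(λ₀)`, `B = diag(λ)`, `λ₀ᵢ ≠ λⱼ`, `P₀` invertible,
source `Q(ξ) = Fₙ (P exp(ξ B) β + c)`, `F† = P₀⁻¹ Fₙ P`, `F_c = P₀⁻¹ Fₙ`,
`F‡ᵢⱼ = F†ᵢⱼ/(λⱼ - λ₀ᵢ)`, and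
`Ψ(x) = P₀ exp(x B₀) (α + ∫_{x_L}^{x} exp(-ξ B₀) P₀⁻¹ Q(ξ) dξ)`, for all `x_L ≤ x_R`:
`∫_{x_L}^{x_R} Ψ(x) dx
  = P₀ B₀⁻¹ (exp(x_R B₀) - exp(x_L B₀))
      [α - exp(-x_L B₀) F‡ exp(x_L B) β + B₀⁻¹ exp(-x_L B₀) F_c c]
    + P₀ F‡ B⁻¹ (exp(x_R B) - exp(x_L B)) β
    - P₀ B₀⁻¹ F_c c (x_R - x_L)`. -/
theorem flux_integral_closed_form {n : ℕ}
    (lam₀ lam : Fin n → ℝ)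
    (B₀ B : Matrix (Fin n) (Fin n) ℝ)
    (hB₀ : B₀ = Matrix.diagonal lam₀) (hB : B = Matrix.diagonal lam)
    (hB₀inv : IsUnit B₀.det) (hBinv : IsUnit B.det)
    (hdist : ∀ i j, lam₀ i ≠ lam j)
    (P₀ P Fn : Matrix (Fin n) (Fin n) ℝ) (hP₀ : IsUnit P₀.det)
    (α β c : Fin n → ℝ)
    (Q : ℝ → Fin n → ℝ)
    (hQ : ∀ ξ : ℝ, Q ξ = Fn.mulVec (P.mulVec ((exp (ξ • B)).mulVec β) + c))
    (Fdag Fc Fddag : Matrix (Fin n) (Fin n) ℝ)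
    (hFdag : Fdag = P₀⁻¹ * Fn * P)
    (hFc : Fc = P₀⁻¹ * Fn)
    (hFddag : ∀ i j, Fddag i j = Fdag i j / (lam j - lam₀ i))
    (xL xR : ℝ) (hx : xL ≤ xR)
    (Ψ : ℝ → Fin n → ℝ)
    (hΨ : ∀ x : ℝ, Ψ x = P₀.mulVec ((exp (x • B₀)).mulVec
      (α + ∫ ξ in xL..x, (exp ((-ξ) • B₀)).mulVec (P₀⁻¹.mulVec (Q ξ))))) :
    (∫ x in xL..xR, Ψ x)
      = (P₀ * B₀⁻¹ * (exp (xR • B₀) - exp (xL • B₀))).mulVec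
          (α - (exp ((-xL) • B₀) * Fddag * exp (xL • B)).mulVec β
            + (B₀⁻¹ * exp ((-xL) • B₀) * Fc).mulVec c)
        + (P₀ * Fddag * B⁻¹ * (exp (xR • B) - exp (xL • B))).mulVec β
        - (xR - xL) • (P₀ * B₀⁻¹ * Fc).mulVec c :=
  flux_integral_closed_form_general lam₀ lam B₀ B hB₀ hB hB₀inv hBinv hdist P₀ P Fn α β c Q hQ Fdag
    Fc Fddag hFdag hFc hFddag xL xR Ψ hΨ
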